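/- Let (W, ≤, R, V) be a model whose frame is forward confluent (for all s, t, u: t ≤ s and t R u imply there exists v with s R v and u ≤ v). Then for every formula A and world s: s ⊨ ◇A (with the definition 'there exist t ≤ s and u with t R u and u ⊨ A') holds if and only if there exists t with s R t and t ⊨ A (Fischer Servi's definition). -/
import Mathlib


inductive Fml : Type
  | atom : ℕ → Fml
  | impl : Fml → Fml → Fml
  | top : Fml
  | bot : Fml
  | and : Fml → Fml → Fml
  | or : Fml → Fml → Fml
  | box : Fml → Fml
  | dia : Fml → Fml
deriving DecidableEq

/-- number of constructors (symbols) in a formula -/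
def Fml.len : Fml → ℕ
  | atom _ => 1
  | impl A B => A.len + B.len + 1
  | top => 1
  | bot => 1
  | and A B => A.len + B.len + 1
  | or A B => A.len + B.len + 1
  | box A => A.len + 1
  | dia A => A.len + 1

/-- a set of formulas is closed under immediate subformulas -/
def ClosedSet (S : Set Fml) : Prop :=
  (∀ A B, Fml.impl A B ∈ S → A ∈ S ∧ B ∈ S) ∧
  (∀ A B, Fml.and A B ∈ S → A ∈ S ∧ B ∈ S) ∧
  (∀ A B, Fml.or A B ∈ S → A ∈ S ∧ B ∈ S) ∧
  (∀ A, Fml.box A ∈ S → A ∈ S) ∧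
  (∀ A, Fml.dia A ∈ S → A ∈ S)

/-- Σ_A : the least closed set of formulas containing A -/
def Sig (A : Fml) : Set Fml := ⋂₀ {S | ClosedSet S ∧ A ∈ S}

/-- Γ° = ⋃ {Σ_B : □B ∈ Γ or ◇B ∈ Γ} -/
def circSet (Γ : Set Fml) : Set Fml :=
  ⋃ B ∈ {B : Fml | Fml.box B ∈ Γ ∨ Fml.dia B ∈ Γ}, Sig B

/-- iterates Γ^α : Γ^0 = Γ, Γ^{α+1} = (Γ^α)° -/
def iterCirc (Γ : Set Fml) : ℕ → Set Fml
  | 0 => Γ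
  | n + 1 => circSet (iterCirc Γ n)

/-- intuitionistic modal satisfaction (the paper's clauses) -/
def Sat {W : Type} (le R : W → W → Prop) (V : ℕ → W → Prop) : Fml → W → Prop
  | .atom p, s => V p s
  | .impl A B, s => ∀ t, le s t → Sat le R V A t → Sat le R V B t
  | .top, _ => True
  | .bot, _ => False
  | .and A B, s => Sat le R V A s ∧ Sat le R V B s
  | .or A B, s => Sat le R V A s ∨ Sat le R V B s
  | .box A, s => ∀ t, le s t → ∀ u, R t u → Sat le R V A u
  | .dia A, s => ∃ t, le t s ∧ ∃ u, R t u ∧ Sat le R V A u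

/-- le is a preorder -/
def IsPre {W : Type} (le : W → W → Prop) : Prop :=
  (∀ s, le s s) ∧ (∀ s t u, le s t → le t u → le s u)

/-- each V p is ≤-closed -/
def VClosed {W : Type} (le : W → W → Prop) (V : ℕ → W → Prop) : Prop :=
  ∀ p s t, V p s → le s t → V p t

def FwdConf {W : Type} (le R : W → W → Prop) : Prop :=
  ∀ s t u, le t s → R t u → ∃ v, R s v ∧ le u v

def DownConf {W : Type} (le R : W → W → Prop) : Prop :=
  ∀ s t u, le s t → R t u → ∃ v, R s v ∧ le v u

def UpConf {W : Type} (le R : W → W → Prop) : Prop :=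
  ∀ s t u, R s t → le u t → ∃ v, le v s ∧ R v u

/-- validity in a frame: true at all worlds under all valuations -/
def ValidIn {W : Type} (le R : W → W → Prop) (A : Fml) : Prop :=
  ∀ V : ℕ → W → Prop, VClosed le V → ∀ s, Sat le R V A s

/-- Fischer Servi's satisfaction relation: only the ◇ clause differs -/
def SatFS {W : Type} (le R : W → W → Prop) (V : ℕ → W → Prop) : Fml → W → Prop
  | .atom p, s => V p s
  | .impl A B, s => ∀ t, le s t → SatFS le R V A t → SatFS le R V B t
  | .top, _ => True
  | .bot, _ => False
  | .and A B, s => SatFS le R V A s ∧ SatFS le R V B s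
  | .or A B, s => SatFS le R V A s ∨ SatFS le R V B s
  | .box A, s => ∀ t, le s t → ∀ u, R t u → SatFS le R V A u
  | .dia A, s => ∃ t, R s t ∧ SatFS le R V A t

lemma satFS_mono {W : Type} (le R : W → W → Prop) (V : ℕ → W → Prop)
    (hpre : IsPre le) (hV : VClosed le V) (hfc : FwdConf le R) :
    ∀ (A : Fml) (s t : W), le s t → SatFS le R V A s → SatFS le R V A t := by
  intro A
  induction A with
  | atom p => intro s t hst h; exact hV p s t h hst
  | impl A B ihA ihB =>
      intro s t hst h u htu hA
      exact h u (hpre.2 s t u hst htu) hA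
  | top => intro s t _ _; trivial
  | bot => intro s t _ h; exact h
  | and A B ihA ihB => intro s t hst h; exact ⟨ihA s t hst h.1, ihB s t hst h.2⟩
  | or A B ihA ihB =>
      intro s t hst h
      cases h with
      | inl h => exact Or.inl (ihA s t hst h)
      | inr h => exact Or.inr (ihB s t hst h)
  | box A ih =>
      intro s t hst h u htu v huv
      exact h u (hpre.2 s t u hst htu) v huv
  | dia A ih =>
      intro s t hst h
      obtain ⟨u, hsu, hA⟩ := h
      obtain ⟨v, htv, huv⟩ := hfc t s u hst hsu
      exact ⟨v, htv, ih u v huv hA⟩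


theorem sat_iff_satFS {W : Type} (le R : W → W → Prop) (V : ℕ → W → Prop)
    (hpre : IsPre le) (hV : VClosed le V) (hfc : FwdConf le R) :
    ∀ (A : Fml) (s : W), Sat le R V A s ↔ SatFS le R V A s := by
  intro A
  induction A with
  | atom p => intro s; rfl
  | impl A B ihA ihB =>
      intro s
      constructor
      · intro h t hst hA; exact (ihB t).mp (h t hst ((ihA t).mpr hA))
      · intro h t hst hA; exact (ihB t).mpr (h t hst ((ihA t).mp hA))
  | top => intro s; simp [Sat, SatFS]
  | bot => intro s; simp [Sat, SatFS]
  | and A B ihA ihB =>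
      intro s; exact and_congr (ihA s) (ihB s)
  | or A B ihA ihB =>
      intro s; exact or_congr (ihA s) (ihB s)
  | box A ih =>
      intro s
      constructor
      · intro h t hst u htu; exact (ih u).mp (h t hst u htu)
      · intro h t hst u htu; exact (ih u).mpr (h t hst u htu)
  | dia A ih =>
      intro s
      constructor
      · rintro ⟨t, hts, u, htu, hA⟩
        obtain ⟨v, hsv, huv⟩ := hfc s t u hts htu
        exact ⟨v, hsv, satFS_mono le R V hpre hV hfc A u v huv ((ih u).mp hA)⟩
      · rintro ⟨t, hst, hA⟩
        exact ⟨s, hpre.1 s, t, hst, (ih t).mpr hA⟩
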